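/- arXiv:2508.01607 — 4 statements merged into one kernel-verified Lean document; each statement's English description precedes it below -/
import Mathlib

section
/- Let X be a metric space with distance |·|, and let f : X → ℝ be a positive α-Lipschitz function with α > 0. Then d(x,y) = log(1 + α|x−y| / min(f(x), f(y))) defines a metric on X. -/
/-! For the triangle inequality assume `f x ≤ f z`, so the minimum in `d(x,z)` is `f x`. The Lipschitz
bound gives `f y ≤ f x + α|x-y|`, and `(1 + α|x-y|/f x) (1 + α|y-z|/(f x + α|x-y|))` telescopes to
`1 + α(|x-y| + |y-z|)/f x ≥ 1 + α|x-z|/f x`. Shrinking the two denominators to the minima occurring in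
`d(x,y)` and `d(y,z)` only enlarges the product; now take logarithms. -/

noncomputable def dfun {X : Type*} [MetricSpace X] (f : X → ℝ) (α : ℝ) (x y : X) : ℝ :=
  Real.log (1 + α * dist x y / min (f x) (f y))

lemma one_add_div_le_one_add_div_mul_one_add_div {p m₁ m₂ s t c : ℝ}
    (hm₁ : 0 < m₁) (hm₁p : m₁ ≤ p) (hm₂ : 0 < m₂) (hm₂p : m₂ ≤ p + s)
    (hs : 0 ≤ s) (ht : 0 ≤ t) (hc : c ≤ s + t) :
    1 + c / p ≤ (1 + s / m₁) * (1 + t / m₂) := by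
  have hp : 0 < p := hm₁.trans_le hm₁p
  calc 1 + c / p ≤ 1 + (s + t) / p := by gcongr
    _ = (1 + s / p) * (1 + t / (p + s)) := by field_simp; ring
    _ ≤ (1 + s / m₁) * (1 + t / m₂) := by gcongr

section

variable {X : Type*} [MetricSpace X] {f : X → ℝ} {α : ℝ}

lemma dfun_comm (x y : X) : dfun f α x y = dfun f α y x := by
  rw [dfun, dfun, dist_comm, min_comm]

lemma dfun_ratio_nonneg (hα : 0 ≤ α) (hpos : ∀ x, 0 < f x) (x y : X) :
    0 ≤ α * dist x y / min (f x) (f y) := by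
  have := hpos x; have := hpos y; positivity

lemma dfun_nonneg (hα : 0 ≤ α) (hpos : ∀ x, 0 < f x) (x y : X) : 0 ≤ dfun f α x y :=
  Real.log_nonneg (by linarith [dfun_ratio_nonneg hα hpos x y])

lemma dfun_pos (hα : 0 < α) (hpos : ∀ x, 0 < f x) {x y : X} (hxy : x ≠ y) :
    0 < dfun f α x y := by
  have := hpos x; have := hpos y
  have : 0 < dist x y := dist_pos.mpr hxy
  exact Real.log_pos (by simp only [lt_add_iff_pos_right]; positivity)

lemma dfun_eq_zero_iff (hα : 0 < α) (hpos : ∀ x, 0 < f x) {x y : X} :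
    dfun f α x y = 0 ↔ x = y := by
  refine ⟨fun h ↦ ?_, fun h ↦ by simp [h, dfun]⟩
  by_contra hxy
  exact (dfun_pos hα hpos hxy).ne' h

lemma dfun_triangle_of_le (hα : 0 ≤ α) (hpos : ∀ x, 0 < f x)
    (hlip : ∀ x y, |f x - f y| ≤ α * dist x y) {x y z : X} (hxz : f x ≤ f z) :
    dfun f α x z ≤ dfun f α x y + dfun f α y z := by
  have hfy : f y ≤ f x + α * dist x y := by
    have := (abs_le.mp (hlip y x)).2
    rw [dist_comm] at this
    linarith
  have hm₁ : 0 < min (f x) (f y) := lt_min (hpos x) (hpos y)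
  have hm₂ : 0 < min (f y) (f z) := lt_min (hpos y) (hpos z)
  have key := one_add_div_le_one_add_div_mul_one_add_div (c := α * dist x z) hm₁
    (min_le_left _ _) hm₂ ((min_le_left _ _).trans hfy) (mul_nonneg hα dist_nonneg)
    (mul_nonneg hα dist_nonneg) (by rw [← mul_add]; gcongr; exact dist_triangle x y z)
  rw [dfun, dfun, dfun, min_eq_left hxz, ← Real.log_mul (by positivity) (by positivity)]
  exact Real.log_le_log (by have := hpos x; positivity) key

lemma dfun_triangle (hα : 0 ≤ α) (hpos : ∀ x, 0 < f x)
    (hlip : ∀ x y, |f x - f y| ≤ α * dist x y) (x y z : X) :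
    dfun f α x z ≤ dfun f α x y + dfun f α y z := by
  rcases le_total (f x) (f z) with hxz | hzx
  · exact dfun_triangle_of_le hα hpos hlip hxz
  · rw [dfun_comm x z, dfun_comm x y, dfun_comm y z, add_comm]
    exact dfun_triangle_of_le hα hpos hlip hzx

end

theorem stmt_0 {X : Type*} [MetricSpace X] (f : X → ℝ) (α : ℝ) (hα : 0 < α)
    (hpos : ∀ x, 0 < f x) (hlip : ∀ x y, |f x - f y| ≤ α * dist x y) :
    (∀ x y, dfun f α x y = dfun f α y x) ∧
    (∀ x y, 0 ≤ dfun f α x y) ∧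
    (∀ x y, dfun f α x y = 0 ↔ x = y) ∧
    (∀ x y z, dfun f α x z ≤ dfun f α x y + dfun f α y z) :=
  ⟨dfun_comm, dfun_nonneg hα.le hpos, fun _ _ ↦ dfun_eq_zero_iff hα hpos,
    dfun_triangle hα.le hpos hlip⟩
end

section
/- Let X be a metric space with distance |·|, and let f : X → ℝ be a positive α-Lipschitz function with α > 0. Then d'(x,y) = (1/2)·log((1 + α|x−y|/f(x))·(1 + α|x−y|/f(y))) defines a metric on X. -/
/-!
Write `ρ x y = 1 + α |x - y| / f x`, so that `d' x y = ½ log (ρ x y ρ y x)`. The Lipschitz bound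
`f y ≤ f x + α |x - y|` makes `ρ` submultiplicative, `ρ x z ≤ ρ x y ρ y z`; multiplying this with its
mirror image `ρ z x ≤ ρ z y ρ y x` and taking logarithms gives the triangle inequality for `d'`.
-/

noncomputable def dfun' {X : Type*} [MetricSpace X] (f : X → ℝ) (α : ℝ) (x y : X) : ℝ :=
  (1 / 2) * Real.log ((1 + α * dist x y / f x) * (1 + α * dist x y / f y))

open Real

section Symmetrize

variable {X : Type*} {ρ : X → X → ℝ}

lemma log_mul_swap_nonneg (hρ : ∀ x y, 1 ≤ ρ x y) (x y : X) : 0 ≤ log (ρ x y * ρ y x) :=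
  log_nonneg (one_le_mul_of_one_le_of_one_le (hρ x y) (hρ y x))

lemma log_mul_swap_eq_zero_iff (hρ : ∀ x y, 1 ≤ ρ x y) (hρ_eq : ∀ x y, ρ x y = 1 ↔ x = y)
    (x y : X) : log (ρ x y * ρ y x) = 0 ↔ x = y := by
  constructor
  · intro h
    have hprod : ρ x y * ρ y x = 1 := by
      rcases log_eq_zero.mp h with h0 | h1 | hneg
      · nlinarith [hρ x y, hρ y x]
      · exact h1
      · nlinarith [hρ x y, hρ y x]
    exact (hρ_eq x y).mp (by nlinarith [hρ x y, hρ y x])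
  · rintro rfl
    simp [(hρ_eq x x).mpr rfl]

lemma log_mul_swap_triangle (hρ : ∀ x y, 1 ≤ ρ x y)
    (hρ_mul : ∀ x y z, ρ x z ≤ ρ x y * ρ y z) (x y z : X) :
    log (ρ x z * ρ z x) ≤ log (ρ x y * ρ y x) + log (ρ y z * ρ z y) := by
  have hpos : ∀ x y, 0 < ρ x y := fun x y => zero_lt_one.trans_le (hρ x y)
  rw [← log_mul (by positivity [hpos x y, hpos y x]) (by positivity [hpos y z, hpos z y])]
  refine log_le_log (mul_pos (hpos x z) (hpos z x)) ?_
  calc ρ x z * ρ z x ≤ (ρ x y * ρ y z) * (ρ z y * ρ y x) :=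
        mul_le_mul (hρ_mul x y z) (hρ_mul z y x) (hpos z x).le (by positivity [hpos x y, hpos y z])
    _ = ρ x y * ρ y x * (ρ y z * ρ z y) := by ring

end Symmetrize

section LipschitzWeight

variable {X : Type*} [MetricSpace X] {f : X → ℝ} {α : ℝ}

noncomputable def lipWeight (f : X → ℝ) (α : ℝ) (x y : X) : ℝ :=
  1 + α * dist x y / f x

lemma dfun'_eq_log_lipWeight (x y : X) :
    dfun' f α x y = 1 / 2 * log (lipWeight f α x y * lipWeight f α y x) := by
  rw [dfun', lipWeight, lipWeight, dist_comm y x]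

lemma one_le_lipWeight (hα : 0 ≤ α) {x : X} (hx : 0 < f x) (y : X) : 1 ≤ lipWeight f α x y :=
  le_add_of_nonneg_right (by positivity)

lemma lipWeight_eq_one_iff (hα : 0 < α) {x : X} (hx : 0 < f x) (y : X) :
    lipWeight f α x y = 1 ↔ x = y := by
  simp [lipWeight, hα.ne', hx.ne']

lemma lipWeight_le_mul (hα : 0 ≤ α) {x y : X} (hx : 0 < f x) (hy : 0 < f y)
    (hxy : f y ≤ f x + α * dist x y) (z : X) :
    lipWeight f α x z ≤ lipWeight f α x y * lipWeight f α y z := by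
  have hb : 0 ≤ α * dist y z := mul_nonneg hα dist_nonneg
  have hc : α * dist x z ≤ α * dist x y + α * dist y z := by
    rw [← mul_add]; exact mul_le_mul_of_nonneg_left (dist_triangle x y z) hα
  simp only [lipWeight]
  rw [one_add_div hx.ne', one_add_div hx.ne', one_add_div hy.ne', div_mul_div_comm,
    div_le_div_iff₀ hx (mul_pos hx hy)]
  nlinarith [mul_le_mul_of_nonneg_left hxy hb, mul_le_mul_of_nonneg_right hc hy.le]

end LipschitzWeight

theorem stmt_1 {X : Type*} [MetricSpace X] (f : X → ℝ) (α : ℝ) (hα : 0 < α)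
    (hpos : ∀ x, 0 < f x) (hlip : ∀ x y, |f x - f y| ≤ α * dist x y) :
    (∀ x y, dfun' f α x y = dfun' f α y x) ∧
    (∀ x y, 0 ≤ dfun' f α x y) ∧
    (∀ x y, dfun' f α x y = 0 ↔ x = y) ∧
    (∀ x y z, dfun' f α x z ≤ dfun' f α x y + dfun' f α y z) := by
  have hρ : ∀ x y, 1 ≤ lipWeight f α x y := fun x => one_le_lipWeight hα.le (hpos x)
  have hρ_mul : ∀ x y z, lipWeight f α x z ≤ lipWeight f α x y * lipWeight f α y z :=
    fun x y => lipWeight_le_mul hα.le (hpos x) (hpos y)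
      (by linarith [(abs_le.mp (hlip x y)).1])
  simp only [dfun'_eq_log_lipWeight]
  refine ⟨fun x y => by rw [mul_comm (lipWeight f α x y)], fun x y => ?_, fun x y => ?_, fun x y z => ?_⟩
  · linarith [log_mul_swap_nonneg hρ x y]
  · simpa using log_mul_swap_eq_zero_iff hρ (fun x => lipWeight_eq_one_iff hα (hpos x)) x y
  · linarith [log_mul_swap_triangle hρ hρ_mul x y z]
end

section
/- Let D ⊊ ℝⁿ be a bounded domain with diameter d. With j_D(x,y) = log(1 + |x−y| / min(δ(x), δ(y))) and ζ_D(x,y) = log(1 + d·|x−y| / min(η(x), η(y))), we have j_D(x,y) ≤ ζ_D(x,y) ≤ 2·j_D(x,y) for all x, y ∈ D. -/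
noncomputable def deltaD {n : ℕ} (D : Set (EuclideanSpace ℝ (Fin n)))
    (z : EuclideanSpace ℝ (Fin n)) : ℝ :=
  Metric.infDist z (frontier D)

noncomputable def etaD {n : ℕ} (D : Set (EuclideanSpace ℝ (Fin n)))
    (z : EuclideanSpace ℝ (Fin n)) : ℝ :=
  deltaD D z * (Metric.diam D - deltaD D z)

noncomputable def zetaD {n : ℕ} (D : Set (EuclideanSpace ℝ (Fin n)))
    (x y : EuclideanSpace ℝ (Fin n)) : ℝ :=
  Real.log (1 + Metric.diam D * dist x y / min (etaD D x) (etaD D y))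

noncomputable def zetaD' {n : ℕ} (D : Set (EuclideanSpace ℝ (Fin n)))
    (x y : EuclideanSpace ℝ (Fin n)) : ℝ :=
  (1 / 2) * Real.log ((1 + Metric.diam D * dist x y / etaD D x) *
    (1 + Metric.diam D * dist x y / etaD D y))

noncomputable def jD {n : ℕ} (D : Set (EuclideanSpace ℝ (Fin n)))
    (x y : EuclideanSpace ℝ (Fin n)) : ℝ :=
  Real.log (1 + dist x y / min (deltaD D x) (deltaD D y))

/-! Since `0 < δ ≤ d/2`, the factor `d - δ` in `η = δ (d - δ)` lies in `[d/2, d]`, so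
`min η(x) η(y)` is within a factor `2` of `d · min δ(x) δ(y)`. Hence the argument `u` of
`ζ_D` and the argument `s` of `j_D` satisfy `s ≤ u ≤ 2s`, and `1 + 2s ≤ (1 + s)²` gives
`ζ_D ≤ 2 j_D`.
Here `δ(z) ≤ d/2` because the ball `B(z, δ(z))`, of diameter `2δ(z)`, lies in `D`. -/

open Metric Set

section FrontierDistance

variable {E : Type*} [NormedAddCommGroup E] [NormedSpace ℝ E] {s : Set E} {z : E}

lemma infDist_frontier_pos_of_isOpen (hopen : IsOpen s) (hs : s ≠ univ) (hz : z ∈ s) :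
    0 < infDist z (frontier s) := by
  have hfr : (frontier s).Nonempty := nonempty_frontier_iff.2 ⟨⟨z, hz⟩, hs⟩
  refine (isClosed_frontier.notMem_iff_infDist_pos hfr).1 fun hzfr => ?_
  rw [hopen.frontier_eq] at hzfr
  exact hzfr.2 hz

variable [FiniteDimensional ℝ E]

lemma infDist_frontier_le_infDist_compl (hs : s ≠ univ) (hz : z ∈ s) :
    infDist z (frontier s) ≤ infDist z sᶜ := by
  obtain ⟨w, hw, hzw⟩ := exists_mem_frontier_infDist_compl_eq_dist hz hs
  exact hzw ▸ infDist_le_dist_of_mem hw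

lemma ball_infDist_frontier_subset (hs : s ≠ univ) (hz : z ∈ s) :
    ball z (infDist z (frontier s)) ⊆ s :=
  (ball_subset_ball (infDist_frontier_le_infDist_compl hs hz)).trans ball_infDist_compl_subset

lemma two_mul_infDist_frontier_le_diam (hbdd : Bornology.IsBounded s) (hs : s ≠ univ)
    (hz : z ∈ s) : 2 * infDist z (frontier s) ≤ diam s := by
  obtain ⟨w, hw⟩ := nonempty_compl.2 hs
  have : Nontrivial E := ⟨z, w, fun hzw => hw (hzw ▸ hz)⟩
  rw [← diam_ball_eq z infDist_nonneg]
  exact diam_mono (ball_infDist_frontier_subset hs hz) hbdd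

end FrontierDistance

section Comparison

variable {n : ℕ} {D : Set (EuclideanSpace ℝ (Fin n))} {x y z : EuclideanSpace ℝ (Fin n)}

lemma etaD_mem_Icc (hz : 2 * deltaD D z ≤ diam D) :
    etaD D z ∈ Icc (diam D / 2 * deltaD D z) (diam D * deltaD D z) := by
  have hδ : 0 ≤ deltaD D z := infDist_nonneg
  constructor <;> (unfold etaD; nlinarith)

lemma min_etaD_mem_Icc (hx : 2 * deltaD D x ≤ diam D) (hy : 2 * deltaD D y ≤ diam D) :
    min (etaD D x) (etaD D y) ∈ Icc (diam D / 2 * min (deltaD D x) (deltaD D y))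
      (diam D * min (deltaD D x) (deltaD D y)) := by
  have hd : 0 ≤ diam D := diam_nonneg
  obtain ⟨hx₁, hx₂⟩ := etaD_mem_Icc hx
  obtain ⟨hy₁, hy₂⟩ := etaD_mem_Icc hy
  rw [mul_min_of_nonneg _ _ (by positivity : (0 : ℝ) ≤ diam D / 2), mul_min_of_nonneg _ _ hd]
  exact ⟨min_le_min hx₁ hy₁, min_le_min hx₂ hy₂⟩

end Comparison

namespace Real

lemma log_one_add_le_two_mul_log_one_add {s u : ℝ} (hs : 0 ≤ s) (hu : 0 ≤ u)
    (h : u ≤ 2 * s) : log (1 + u) ≤ 2 * log (1 + s) := by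
  calc log (1 + u) ≤ log ((1 + s) ^ 2) := log_le_log (by linarith) (by nlinarith)
    _ = 2 * log (1 + s) := by rw [log_pow, Nat.cast_ofNat]

lemma log_one_add_div_le_log_one_add_mul_div {t a m d : ℝ} (ht : 0 ≤ t) (ha : 0 < a)
    (hm : 0 < m) (h : m ≤ d * a) : log (1 + t / a) ≤ log (1 + d * t / m) := by
  have hd : 0 < d := pos_of_mul_pos_left (hm.trans_le h) ha.le
  have : t / a ≤ d * t / m := calc
    t / a = d * t / (d * a) := (mul_div_mul_left t a hd.ne').symm
    _ ≤ d * t / m := div_le_div_of_nonneg_left (by positivity) hm h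
  exact log_le_log (by positivity) (by linarith)

lemma log_one_add_mul_div_le_two_mul_log_one_add_div {t a m d : ℝ} (ht : 0 ≤ t) (ha : 0 < a)
    (hd : 0 < d) (h : d / 2 * a ≤ m) : log (1 + d * t / m) ≤ 2 * log (1 + t / a) := by
  refine log_one_add_le_two_mul_log_one_add (by positivity)
    (div_nonneg (by positivity) ((by positivity : (0 : ℝ) ≤ d / 2 * a).trans h)) ?_
  calc d * t / m ≤ d * t / (d / 2 * a) :=
        div_le_div_of_nonneg_left (by positivity) (by positivity) h
    _ = 2 * (t / a) := by field_simp

end Real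

theorem stmt_9_general {n : ℕ} (D : Set (EuclideanSpace ℝ (Fin n)))
    (hopen : IsOpen D) (hproper : D ≠ Set.univ)
    (hbdd : Bornology.IsBounded D)
    (x y : EuclideanSpace ℝ (Fin n)) (hx : x ∈ D) (hy : y ∈ D) :
    jD D x y ≤ zetaD D x y ∧ zetaD D x y ≤ 2 * jD D x y := by
  have hδx : 0 < deltaD D x := infDist_frontier_pos_of_isOpen hopen hproper hx
  have hδy : 0 < deltaD D y := infDist_frontier_pos_of_isOpen hopen hproper hy
  have hδ : 0 < min (deltaD D x) (deltaD D y) := lt_min hδx hδy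
  have hxd : 2 * deltaD D x ≤ diam D := two_mul_infDist_frontier_le_diam hbdd hproper hx
  have hyd : 2 * deltaD D y ≤ diam D := two_mul_infDist_frontier_le_diam hbdd hproper hy
  have hd : 0 < diam D := by linarith
  obtain ⟨hlo, hhi⟩ := min_etaD_mem_Icc hxd hyd
  exact ⟨Real.log_one_add_div_le_log_one_add_mul_div dist_nonneg hδ
      ((by positivity : (0 : ℝ) < diam D / 2 * _).trans_le hlo) hhi,
    Real.log_one_add_mul_div_le_two_mul_log_one_add_div dist_nonneg hδ hd hlo⟩

theorem stmt_9 {n : ℕ} (hn : 2 ≤ n) (D : Set (EuclideanSpace ℝ (Fin n)))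
    (hopen : IsOpen D) (hconn : IsConnected D) (hproper : D ≠ Set.univ)
    (hbdd : Bornology.IsBounded D)
    (x y : EuclideanSpace ℝ (Fin n)) (hx : x ∈ D) (hy : y ∈ D) :
    jD D x y ≤ zetaD D x y ∧ zetaD D x y ≤ 2 * jD D x y :=
  stmt_9_general D hopen hproper hbdd x y hx hy
end

section
/- Let D ⊊ ℝⁿ be a bounded domain with diameter d, fix s ∈ (0,1), and let x, y ∈ D with |x−y| < s·η(x)/d. Then m_D(x,y) ≤ (1/(1−s))·ζ_D(x,y). -/
/-- The length of a C¹ path with respect to the density `diam D / η`. -/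
noncomputable def mLength {n : ℕ} (D : Set (EuclideanSpace ℝ (Fin n)))
    (γ : ℝ → EuclideanSpace ℝ (Fin n)) : ℝ :=
  ∫ t in (0:ℝ)..1, (Metric.diam D / etaD D (γ t)) * ‖deriv γ t‖

/-- The infimal path-length metric `m_D` with density `diam D / η(z)`. -/
noncomputable def mDist {n : ℕ} (D : Set (EuclideanSpace ℝ (Fin n)))
    (x y : EuclideanSpace ℝ (Fin n)) : ℝ :=
  sInf { L : ℝ | ∃ γ : ℝ → EuclideanSpace ℝ (Fin n),
    ContDiffOn ℝ 1 γ (Set.Icc 0 1) ∧ γ 0 = x ∧ γ 1 = y ∧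
    (∀ t ∈ Set.Icc (0:ℝ) 1, γ t ∈ D) ∧ L = mLength D γ }

/-
Along the segment `γ t = lineMap x y t`, which stays in the ball `B(x, δ(x)) ⊆ D`, the 1-Lipschitz
function `δ` gives `η(γ t) ≥ η(x) - d t |x - y|`. Hence the `m_D`-length of the segment is at most
`∫₀¹ u / (1 - u t) dt = -log (1 - u)` with `u = d |x - y| / η(x) ≤ s`, and concavity of `log` gives
`-log (1 - u) ≤ log (1 + u) / (1 - u) ≤ log (1 + u) / (1 - s) ≤ ζ_D(x, y) / (1 - s)`.
-/

open Real Set AffineMap Metric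

lemma neg_log_one_sub_le_one_div_mul_log_one_add {s u : ℝ} (hu0 : 0 ≤ u) (hus : u ≤ s)
    (hs1 : s < 1) : -log (1 - u) ≤ 1 / (1 - s) * log (1 + u) := by
  have h1u : 0 < 1 - u := by linarith
  -- concavity of `log` at the point `1 + u = (1 - u) • (1 - u)⁻¹ + u • 1`
  have hconc : (1 - u) * -log (1 - u) ≤ log (1 + u) := by
    have := strictConcaveOn_log_Ioi.concaveOn.2 (mem_Ioi.2 (inv_pos.2 h1u)) (mem_Ioi.2 one_pos)
      h1u.le hu0 (by ring)
    simpa [smul_eq_mul, log_inv, show (1 - u) * (1 - u)⁻¹ + u = 1 + u by field_simp] using this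
  have hlog : 0 ≤ -log (1 - u) := neg_nonneg.2 (log_nonpos h1u.le (by linarith))
  rw [one_div_mul_eq_div, le_div_iff₀ (by linarith)]
  nlinarith

lemma one_sub_mul_pos {u t : ℝ} (hu : u < 1) (ht : t ∈ uIcc (0 : ℝ) 1) : 0 < 1 - u * t := by
  rw [uIcc_of_le zero_le_one] at ht
  rcases le_or_gt u 0 with h | h <;> nlinarith [ht.1, ht.2]

lemma intervalIntegrable_div_one_sub_mul {u : ℝ} (hu : u < 1) :
    IntervalIntegrable (fun t => u / (1 - u * t)) MeasureTheory.volume 0 1 :=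
  (continuousOn_const.div (by fun_prop) fun _ ht => (one_sub_mul_pos hu ht).ne').intervalIntegrable

lemma integral_div_one_sub_mul {u : ℝ} (hu : u < 1) :
    ∫ t in (0 : ℝ)..1, u / (1 - u * t) = -log (1 - u) := by
  have hderiv : ∀ t ∈ uIcc (0 : ℝ) 1,
      HasDerivAt (fun t => -log (1 - u * t)) (u / (1 - u * t)) t := by
    intro t ht
    have h := (((hasDerivAt_id t).const_mul u).const_sub 1).log (one_sub_mul_pos hu ht).ne'
    simpa [neg_div] using h.fun_neg
  rw [intervalIntegral.integral_eq_sub_of_hasDerivAt hderiv (intervalIntegrable_div_one_sub_mul hu)]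
  simp

lemma lt_and_lt_sub_of_mul_lt_mul_sub {a d ρ : ℝ} (ha : 0 ≤ a) (hρ : 0 ≤ ρ) (hd : 0 ≤ d)
    (h : d * ρ < a * (d - a)) : ρ < a ∧ ρ < d - a := by
  have hda : 0 < d - a := by nlinarith
  constructor <;> nlinarith

lemma Metric.ball_infDist_frontier_subset {E : Type*} [NormedAddCommGroup E] [NormedSpace ℝ E]
    [FiniteDimensional ℝ E] {s : Set E} {x : E} (hx : x ∈ s) :
    ball x (infDist x (frontier s)) ⊆ s := by
  rcases eq_or_ne s univ with rfl | hs
  · exact subset_univ _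
  obtain ⟨p, hp, hxp⟩ := exists_mem_frontier_infDist_compl_eq_dist hx hs
  exact (ball_subset_ball (hxp ▸ infDist_le_dist_of_mem hp)).trans ball_infDist_compl_subset

section

variable {n : ℕ} {D : Set (EuclideanSpace ℝ (Fin n))} {x y z : EuclideanSpace ℝ (Fin n)}

lemma continuous_etaD : Continuous (etaD D) :=
  (continuous_infDist_pt _).mul (continuous_const.sub (continuous_infDist_pt _))

lemma deltaD_le_diam (hD : Bornology.IsBounded D) (hz : z ∈ D) : deltaD D z ≤ diam D := by
  rcases (frontier D).eq_empty_or_nonempty with h | ⟨p, hp⟩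
  · simp [deltaD, h, diam_nonneg]
  calc deltaD D z ≤ dist z p := infDist_le_dist_of_mem hp
    _ ≤ diam (closure D) :=
      dist_le_diam_of_mem hD.closure (subset_closure hz) (frontier_subset_closure hp)
    _ = diam D := diam_closure D

lemma etaD_nonneg (hD : Bornology.IsBounded D) (hz : z ∈ D) : 0 ≤ etaD D z :=
  mul_nonneg infDist_nonneg (sub_nonneg.2 (deltaD_le_diam hD hz))

lemma dist_lt_deltaD_of_mul_lt_etaD (h : diam D * dist x z < etaD D x) :
    dist x z < deltaD D x ∧ dist x z < diam D - deltaD D x :=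
  lt_and_lt_sub_of_mul_lt_mul_sub infDist_nonneg dist_nonneg diam_nonneg h

lemma etaD_sub_le (h : diam D * dist x z < etaD D x) :
    etaD D x - diam D * dist x z ≤ etaD D z := by
  obtain ⟨hδ, hδ'⟩ := dist_lt_deltaD_of_mul_lt_etaD h
  have hlow : deltaD D x - dist x z ≤ deltaD D z :=
    sub_le_iff_le_add.2 infDist_le_infDist_add_dist
  have hupp : deltaD D z ≤ deltaD D x + dist x z := by
    rw [dist_comm]
    exact infDist_le_infDist_add_dist
  have hprod : (deltaD D x - dist x z) * (diam D - deltaD D x - dist x z) ≤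
      deltaD D z * (diam D - deltaD D z) :=
    mul_le_mul hlow (by linarith) (by linarith) (by linarith)
  unfold etaD
  nlinarith [sq_nonneg (dist x z)]

lemma mDist_le_mLength (hD : Bornology.IsBounded D) {γ : ℝ → EuclideanSpace ℝ (Fin n)}
    (hγ : ContDiffOn ℝ 1 γ (Icc 0 1)) (h0 : γ 0 = x) (h1 : γ 1 = y)
    (hγD : ∀ t ∈ Icc (0 : ℝ) 1, γ t ∈ D) : mDist D x y ≤ mLength D γ := by
  refine csInf_le ⟨0, ?_⟩ ⟨γ, hγ, h0, h1, hγD, rfl⟩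
  rintro L ⟨γ', -, -, -, hγ'D, rfl⟩
  refine intervalIntegral.integral_nonneg zero_le_one fun t ht => ?_
  exact mul_nonneg (div_nonneg diam_nonneg (etaD_nonneg hD (hγ'D t ht))) (norm_nonneg _)

lemma lineMap_mem_of_mul_dist_lt_etaD (hx : x ∈ D) (h : diam D * dist x y < etaD D x) {t : ℝ}
    (ht : t ∈ Icc (0 : ℝ) 1) : lineMap x y t ∈ D := by
  apply ball_infDist_frontier_subset hx
  rw [mem_ball, dist_lineMap_left, Real.norm_eq_abs, abs_of_nonneg ht.1]
  exact lt_of_le_of_lt (mul_le_of_le_one_left dist_nonneg ht.2)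
    (dist_lt_deltaD_of_mul_lt_etaD h).1

lemma mLength_lineMap :
    mLength D (lineMap x y) = ∫ t in (0 : ℝ)..1, diam D * dist x y / etaD D (lineMap x y t) := by
  refine intervalIntegral.integral_congr fun t _ => ?_
  simp only [hasDerivAt_lineMap.deriv, ← dist_eq_norm, dist_comm y x]
  ring

lemma mLength_lineMap_le (h : diam D * dist x y < etaD D x) :
    mLength D (lineMap x y) ≤ -log (1 - diam D * dist x y / etaD D x) := by
  set c := diam D * dist x y
  set A := etaD D x
  have hc : 0 ≤ c := mul_nonneg diam_nonneg dist_nonneg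
  have hA : 0 < A := hc.trans_lt h
  have hu : c / A < 1 := (div_lt_one hA).2 h
  have hlow : ∀ t ∈ Icc (0 : ℝ) 1, A - c * t ≤ etaD D (lineMap x y t) ∧ 0 < A - c * t := by
    intro t ht
    have hct : diam D * dist x (lineMap x y t) = c * t := by
      rw [dist_left_lineMap, Real.norm_eq_abs, abs_of_nonneg ht.1]
      ring
    have hlt : c * t < A := lt_of_le_of_lt (mul_le_of_le_one_right hc ht.2) h
    exact ⟨hct ▸ etaD_sub_le (hct ▸ hlt), by linarith⟩
  rw [mLength_lineMap, ← integral_div_one_sub_mul hu]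
  refine intervalIntegral.integral_mono_on zero_le_one ?_ ?_ fun t ht => ?_
  · refine ContinuousOn.intervalIntegrable (continuousOn_const.div
      (continuous_etaD.comp lineMap_continuous).continuousOn fun t ht => ?_)
    rw [uIcc_of_le zero_le_one] at ht
    exact (lt_of_lt_of_le (hlow t ht).2 (hlow t ht).1).ne'
  · exact intervalIntegrable_div_one_sub_mul hu
  · obtain ⟨hle, hpos⟩ := hlow t ht
    calc c / etaD D (lineMap x y t) ≤ c / (A - c * t) := div_le_div_of_nonneg_left hc hpos hle
      _ = c / A / (1 - c / A * t) := by field_simp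

lemma log_one_add_le_zetaD (h : diam D * dist x y < etaD D x) :
    log (1 + diam D * dist x y / etaD D x) ≤ zetaD D x y := by
  have hc : 0 ≤ diam D * dist x y := mul_nonneg diam_nonneg dist_nonneg
  have hy : 0 < etaD D y := by linarith [etaD_sub_le h]
  have hmin : 0 < min (etaD D x) (etaD D y) := lt_min (hc.trans_lt h) hy
  refine log_le_log (add_pos_of_pos_of_nonneg one_pos (div_nonneg hc (hc.trans_lt h).le)) ?_
  gcongr
  exact min_le_left _ _

end

theorem stmt_15_general {n : ℕ} (D : Set (EuclideanSpace ℝ (Fin n)))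
    (s : ℝ) (hs : s ∈ Set.Ioo (0:ℝ) 1)
    (x y : EuclideanSpace ℝ (Fin n)) (hx : x ∈ D)
    (hclose : dist x y < s * etaD D x / Metric.diam D) :
    mDist D x y ≤ (1 / (1 - s)) * zetaD D x y := by
  obtain ⟨hs0, hs1⟩ := hs
  have hpos : 0 < s * etaD D x / diam D := lt_of_le_of_lt dist_nonneg hclose
  have hd : 0 < diam D := diam_nonneg.lt_of_ne fun h => by simp [← h] at hpos
  have hA : 0 < etaD D x := pos_of_mul_pos_right (div_pos_iff_of_pos_right hd |>.1 hpos) hs0.le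
  have hcs : diam D * dist x y < s * etaD D x := by rwa [lt_div_iff₀' hd] at hclose
  have hc : diam D * dist x y < etaD D x := hcs.trans (mul_lt_of_lt_one_left hA hs1)
  have hus : diam D * dist x y / etaD D x ≤ s := by rw [div_le_iff₀ hA]; exact hcs.le
  have hD : Bornology.IsBounded D := by
    by_contra h
    exact hd.ne' (diam_eq_zero_of_unbounded h)
  calc mDist D x y ≤ mLength D (lineMap x y) :=
        mDist_le_mLength hD (contDiff_lineMap x y).contDiffOn (lineMap_apply_zero x y)
          (lineMap_apply_one x y) fun t ht => lineMap_mem_of_mul_dist_lt_etaD hx hc ht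
    _ ≤ -log (1 - diam D * dist x y / etaD D x) := mLength_lineMap_le hc
    _ ≤ 1 / (1 - s) * log (1 + diam D * dist x y / etaD D x) :=
        neg_log_one_sub_le_one_div_mul_log_one_add (by positivity) hus hs1
    _ ≤ 1 / (1 - s) * zetaD D x y := by
        gcongr
        exact log_one_add_le_zetaD hc

theorem stmt_15 {n : ℕ} (hn : 2 ≤ n) (D : Set (EuclideanSpace ℝ (Fin n)))
    (hopen : IsOpen D) (hconn : IsConnected D) (hproper : D ≠ Set.univ)
    (hbdd : Bornology.IsBounded D)
    (s : ℝ) (hs : s ∈ Set.Ioo (0:ℝ) 1)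
    (x y : EuclideanSpace ℝ (Fin n)) (hx : x ∈ D) (hy : y ∈ D)
    (hclose : dist x y < s * etaD D x / Metric.diam D) :
    mDist D x y ≤ (1 / (1 - s)) * zetaD D x y :=
  stmt_15_general D s hs x y hx hclose
end
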